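/- arXiv:2001.06061 — 2 statements merged into one kernel-verified Lean document; each statement's English description precedes it below -/
import Mathlib

section
/- Let (R,σ) be a ring with involution having no zero divisors which is σ-Euclidean. Then for all a, b ∈ R with a·σ(b) ∈ R⁺, the right ideal a·R + b·R is principal: there exists g ∈ R such that a·R + b·R = g·R. -/
/-!
Euclid's algorithm, run on right ideals: if `a * σ b` is `σ`-fixed, division with a `σ`-fixed
quotient `q` replaces `(a, b)` by `(b, a - b * q)`, which generates the same right ideal and
again has `b * σ (a - b * q)` fixed by `σ`. The stathm strictly decreases along the second
entry, so well-foundedness reaches a pair `(g, 0)`.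
-/

/-- A ring `R` with involution `σ` is `σ`-Euclidean if there are a well-ordered set `W`
and a stathm `Φ : R → W` such that for all `a b : R` with `b ≠ 0` and `a * σ b ∈ R⁺`
there is `q ∈ R⁺` with `Φ (a - b * q) < Φ b`. -/
def SigmaEuclidean {R : Type*} [Ring R] (σ : R → R) : Prop :=
  ∃ (W : Type) (r : W → W → Prop) (Φ : R → W), IsWellOrder W r ∧
    ∀ a b : R, b ≠ 0 → σ (a * σ b) = a * σ b →
      ∃ q : R, σ q = q ∧ r (Φ (a - b * q)) (Φ b)

section RightIdeal

variable {R : Type*} [Ring R]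

def IsPrincipalRightSpan (a b : R) : Prop :=
  ∃ g : R, ∀ x : R, (∃ s t : R, x = a * s + b * t) ↔ ∃ u : R, x = g * u

theorem isPrincipalRightSpan_zero (a : R) : IsPrincipalRightSpan a 0 :=
  ⟨a, fun x => ⟨fun ⟨s, t, hx⟩ => ⟨s, by simp [hx]⟩, fun ⟨u, hx⟩ => ⟨u, 0, by simp [hx]⟩⟩⟩

theorem exists_mul_add_mul_iff_sub_mul (a b q x : R) :
    (∃ s t : R, x = a * s + b * t) ↔ ∃ s t : R, x = b * s + (a - b * q) * t := by
  constructor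
  · rintro ⟨s, t, rfl⟩
    exact ⟨q * s + t, s, by noncomm_ring⟩
  · rintro ⟨s, t, rfl⟩
    exact ⟨t, s - q * t, by noncomm_ring⟩

theorem IsPrincipalRightSpan.of_sub_mul {a b q : R} (h : IsPrincipalRightSpan b (a - b * q)) :
    IsPrincipalRightSpan a b := by
  obtain ⟨g, hg⟩ := h
  exact ⟨g, fun x => (exists_mul_add_mul_iff_sub_mul a b q x).trans (hg x)⟩

end RightIdeal

section Involution

variable {R : Type*} [Ring R] {σ : R → R}

theorem mul_sigma_sub_mul_fixed (hadd : ∀ x y : R, σ (x + y) = σ x + σ y)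
    (hmul : ∀ x y : R, σ (x * y) = σ y * σ x) (hinvol : ∀ x : R, σ (σ x) = x)
    {a b q : R} (hab : σ (a * σ b) = a * σ b) (hq : σ q = q) :
    σ (b * σ (a - b * q)) = b * σ (a - b * q) := by
  have hsub (x y : R) : σ (x - y) = σ x - σ y := (AddMonoidHom.mk' σ hadd).map_sub x y
  have hba : b * σ a = a * σ b := by rw [← hab, hmul, hinvol]
  have hbqb : σ (b * q * σ b) = b * q * σ b := by
    rw [hmul, hmul, hinvol, hq, mul_assoc]
  have expand : b * σ (a - b * q) = b * σ a - b * q * σ b := by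
    rw [hsub, hmul, hq, mul_sub, mul_assoc]
  rw [expand, hsub, hbqb, hba, hab]

end Involution

theorem twisted_euclidean_principal_general {R : Type*} [Ring R] (σ : R → R)
    (hadd : ∀ x y : R, σ (x + y) = σ x + σ y)
    (hmul : ∀ x y : R, σ (x * y) = σ y * σ x)
    (hinvol : ∀ x : R, σ (σ x) = x)
    (heuc : SigmaEuclidean σ) :
    ∀ a b : R, σ (a * σ b) = a * σ b →
      ∃ g : R, ∀ x : R, (∃ s t : R, x = a * s + b * t) ↔ (∃ u : R, x = g * u) := by
  obtain ⟨W, r, Φ, hwo, hdiv⟩ := heuc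
  intro a b hab
  induction b using (InvImage.wf Φ hwo.toIsWellFounded.wf).induction generalizing a with
  | _ b ih =>
    by_cases hb : b = 0
    · subst hb
      exact isPrincipalRightSpan_zero a
    obtain ⟨q, hq, hlt⟩ := hdiv a b hb hab
    exact IsPrincipalRightSpan.of_sub_mul
      (ih (a - b * q) hlt b (mul_sigma_sub_mul_fixed hadd hmul hinvol hab hq))

/-- If `(R, σ)` is a ring with involution, without zero divisors, and is
`σ`-Euclidean, then for all `a b : R` with `a * σ b` fixed by `σ`, the right ideal
`a·R + b·R` is principal. -/
theorem twisted_euclidean_principal {R : Type*} [Ring R] (σ : R → R)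
    (hadd : ∀ x y : R, σ (x + y) = σ x + σ y)
    (hmul : ∀ x y : R, σ (x * y) = σ y * σ x)
    (hinvol : ∀ x : R, σ (σ x) = x)
    (hnzd : ∀ x y : R, x * y = 0 → x = 0 ∨ y = 0)
    (heuc : SigmaEuclidean σ) :
    ∀ a b : R, σ (a * σ b) = a * σ b →
      ∃ g : R, ∀ x : R, (∃ s t : R, x = a * s + b * t) ↔ (∃ u : R, x = g * u) :=
  twisted_euclidean_principal_general σ hadd hmul hinvol heuc
end

section
/- Let H = (−1,−2/ℚ) be the quaternion algebra over ℚ with i² = −1, j² = −2, k = ij = −ji, with orthogonal involution ♯(w + xi + yj + tk) = w + xi + yj − tk, and let O be the ℤ-span of 1, i, (1 + i + j)/2, (1 + i + k)/2. Then O is norm ♯-Euclidean: for all a, b ∈ O with b ≠ 0 and a·♯(b) ∈ O⁺, there exists q ∈ O⁺ with nrm(a − b·q) < nrm(b). -/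
/-!
Since `b̄ b = nrm b`, we have `nrm b · nrm (a - b q) = nrm (b̄ a - nrm b · q)`. The condition
`♯(a ♯b) = a ♯b` says exactly that `b̄ a` has no `k`-component, so it suffices that every point
of `ℚ ⊕ ℚi ⊕ ℚj` lies at norm distance `< 1` from the lattice `O⁺ = ℤ⟨1, i, (1 + i + j)/2⟩`,
which follows by rounding coordinates.
-/

/-- The reduced norm `nrm(z) = z·z̄` of a rational quaternion, as a rational number. -/
def qnrm {α β : ℚ} (q : QuaternionAlgebra ℚ α 0 β) : ℚ := (q * star q).re

/-- The orthogonal involution `♯` on a quaternion algebra negating the `k`-component. -/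
def kSharp {R : Type*} [CommRing R] {c₁ c₂ : R} (q : QuaternionAlgebra R c₁ 0 c₂) :
    QuaternionAlgebra R c₁ 0 c₂ := ⟨q.re, q.imI, q.imJ, -q.imK⟩

/-- The `ℤ`-span of `1, i, (1 + i + j)/2, (1 + i + k)/2` in `(−1,−2/ℚ)`. -/
def Ord12 : Submodule ℤ (QuaternionAlgebra ℚ (-1) 0 (-2)) :=
  Submodule.span ℤ
    {(1 : QuaternionAlgebra ℚ (-1) 0 (-2)), ⟨0, 1, 0, 0⟩, ⟨1/2, 1/2, 1/2, 0⟩,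
      ⟨1/2, 1/2, 0, 1/2⟩}

open QuaternionAlgebra

section kSharp

variable {R : Type*} [CommRing R] {c₁ c₂ : R}

theorem kSharp_eq_self_iff [NoZeroDivisors R] [CharZero R] {q : QuaternionAlgebra R c₁ 0 c₂} :
    kSharp q = q ↔ q.imK = 0 := by
  simp [kSharp, QuaternionAlgebra.ext_iff, CharZero.neg_eq_self_iff]

theorem imK_star_mul_eq_imK_mul_kSharp (a b : QuaternionAlgebra R c₁ 0 c₂) :
    (star b * a).imK = (a * kSharp b).imK := by
  simp only [imK_mul, imK_star, imI_star, imJ_star, re_star, kSharp]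
  ring

end kSharp

section qnrm

variable {α β : ℚ}

theorem qnrm_eq (q : QuaternionAlgebra ℚ α 0 β) :
    qnrm q = q.re ^ 2 - α * q.imI ^ 2 - β * q.imJ ^ 2 + α * β * q.imK ^ 2 := by
  simp only [qnrm, re_mul, re_star, imI_star, imJ_star, imK_star]
  ring

theorem qnrm_mul (p q : QuaternionAlgebra ℚ α 0 β) : qnrm (p * q) = qnrm p * qnrm q := by
  simp only [qnrm_eq, re_mul, imI_mul, imJ_mul, imK_mul]
  ring

theorem qnrm_star (q : QuaternionAlgebra ℚ α 0 β) : qnrm (star q) = qnrm q := by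
  simp only [qnrm_eq, re_star, imI_star, imJ_star, imK_star]
  ring

theorem qnrm_smul (r : ℚ) (q : QuaternionAlgebra ℚ α 0 β) : qnrm (r • q) = r ^ 2 * qnrm q := by
  simp only [qnrm_eq, re_smul, imI_smul, imJ_smul, imK_smul, smul_eq_mul]
  ring

theorem star_mul_self_eq_qnrm (q : QuaternionAlgebra ℚ α 0 β) : star q * q = ↑(qnrm q) := by
  rw [star_mul_eq_coe, qnrm, re_mul, re_mul]
  congr 1
  simp only [re_star, imI_star, imJ_star, imK_star]
  ring

theorem qnrm_pos (hα : α < 0) (hβ : β < 0) {q : QuaternionAlgebra ℚ α 0 β} (hq : q ≠ 0) :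
    0 < qnrm q := by
  rw [qnrm_eq]
  contrapose! hq
  have hI := mul_nonneg (neg_nonneg.2 hα.le) (sq_nonneg q.imI)
  have hJ := mul_nonneg (neg_nonneg.2 hβ.le) (sq_nonneg q.imJ)
  have hK := mul_nonneg (mul_nonneg_of_nonpos_of_nonpos hα.le hβ.le) (sq_nonneg q.imK)
  have hre := sq_nonneg q.re
  have h0 : q.re ^ 2 = 0 := by linarith
  have h1 : -α * q.imI ^ 2 = 0 := by linarith
  have h2 : -β * q.imJ ^ 2 = 0 := by linarith
  have h3 : α * β * q.imK ^ 2 = 0 := by linarith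
  ext <;> simp_all [hα.ne, hβ.ne]

end qnrm

/-- `ord12Plus u v c = u + v i + c (1 + i + j)/2`; these are exactly the elements of `O⁺`. -/
def ord12Plus (u v c : ℤ) : QuaternionAlgebra ℚ (-1) 0 (-2) := ⟨u + c / 2, v + c / 2, c / 2, 0⟩

theorem ord12Plus_mem (u v c : ℤ) : ord12Plus u v c ∈ Ord12 := by
  have h : ord12Plus u v c = u • (1 : QuaternionAlgebra ℚ (-1) 0 (-2)) + v • ⟨0, 1, 0, 0⟩ +
      c • ⟨1 / 2, 1 / 2, 1 / 2, 0⟩ := by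
    ext <;>
      simp only [ord12Plus, zsmul_eq_mul, mul_one, smul_mk, smul_zero, re_add, imI_add, imJ_add,
        imK_add, re_intCast, imI_intCast, imJ_intCast, imK_intCast] <;>
      ring
  rw [h]
  refine add_mem (add_mem ?_ ?_) ?_ <;> refine Submodule.smul_mem _ _ (Submodule.subset_span ?_)
  all_goals simp

theorem kSharp_ord12Plus (u v c : ℤ) : kSharp (ord12Plus u v c) = ord12Plus u v c :=
  kSharp_eq_self_iff.2 rfl

theorem sq_sub_round_le (x : ℚ) : (x - round x) ^ 2 ≤ 1 / 4 := by
  rw [← sq_abs]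
  calc |x - round x| ^ 2 ≤ (1 / 2) ^ 2 := pow_le_pow_left₀ (abs_nonneg _) (abs_sub_round x) 2
    _ = 1 / 4 := by norm_num

/-- Rounding the coordinates gives `qnrm ≤ 1/4 + 1/4 + 2 · 1/16 = 5/8`. -/
theorem exists_qnrm_sub_ord12Plus_lt_one {x : QuaternionAlgebra ℚ (-1) 0 (-2)} (hx : x.imK = 0) :
    ∃ u v c : ℤ, qnrm (x - ord12Plus u v c) < 1 := by
  set c := round (2 * x.imJ)
  refine ⟨round (x.re - c / 2), round (x.imI - c / 2), c, ?_⟩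
  have hre := sq_sub_round_le (x.re - c / 2)
  have hI := sq_sub_round_le (x.imI - c / 2)
  have hJ := sq_sub_round_le (2 * x.imJ)
  rw [qnrm_eq]
  simp only [ord12Plus, re_sub, imI_sub, imJ_sub, imK_sub, hx]
  linarith

/-- the order spanned by `1, i, (1+i+j)/2, (1+i+k)/2` in `(−1,−2/ℚ)` with
the involution `♯` negating the `k`-component is norm `♯`-Euclidean. -/
theorem ord12_norm_sharp_euclidean :
    ∀ a b : QuaternionAlgebra ℚ (-1) 0 (-2), a ∈ Ord12 → b ∈ Ord12 →
      b ≠ 0 → a * kSharp b ∈ Ord12 → kSharp (a * kSharp b) = a * kSharp b →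
      ∃ q ∈ Ord12, kSharp q = q ∧ qnrm (a - b * q) < qnrm b := by
  intro a b _ _ hb _ hsharp
  set n := qnrm b
  have hn : 0 < n := qnrm_pos (by norm_num) (by norm_num) hb
  have hx : (n⁻¹ • (star b * a)).imK = 0 := by
    rw [imK_smul, imK_star_mul_eq_imK_mul_kSharp, kSharp_eq_self_iff.1 hsharp, smul_zero]
  obtain ⟨u, v, c, hlt⟩ := exists_qnrm_sub_ord12Plus_lt_one hx
  set q := ord12Plus u v c
  refine ⟨q, ord12Plus_mem u v c, kSharp_ord12Plus u v c, ?_⟩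
  have hdiv : star b * (a - b * q) = n • (n⁻¹ • (star b * a) - q) := by
    rw [mul_sub, ← mul_assoc, star_mul_self_eq_qnrm, coe_mul_eq_smul, smul_sub,
      smul_inv_smul₀ hn.ne']
  have hmul : n * qnrm (a - b * q) < n * n := by
    calc n * qnrm (a - b * q) = qnrm (star b * (a - b * q)) := by rw [qnrm_mul, qnrm_star]
      _ = n ^ 2 * qnrm (n⁻¹ • (star b * a) - q) := by rw [hdiv, qnrm_smul]
      _ < n ^ 2 * 1 := by gcongr
      _ = n * n := by ring
  exact lt_of_mul_lt_mul_left hmul hn.le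
end
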